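/- Let X be a linear cycle set and A an abelian group, and suppose H²_N(X;A) = 0. Then for every central extension E = X ⊕_{f,g} A and every pair (φ,θ) ∈ Aut(X) × Aut(A), there exists ψ ∈ Aut_A(E) of the form ψ(x,a) = (φ(x), λ(x)+θ(a)) for some λ : X → A. -/

import Mathlib

/-- A (left) linear cycle set on an abelian group `X`. -/
structure LCS (X : Type*) [AddCommGroup X] where
  dot : X → X → X
  bij : ∀ x, Function.Bijective (dot x)
  cyc : ∀ x y z, dot (dot x y) (dot x z) = dot (dot y x) (dot y z)
  dot_add : ∀ x y z, dot x (y + z) = dot x y + dot x z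
  add_dot : ∀ x y z, dot (x + y) z = dot (dot x y) (dot x z)

/-- 2-cocycle conditions for a linear cycle set with coefficients in `A`. -/
def IsCocycle {X A : Type*} [AddCommGroup X] [AddCommGroup A] (L : LCS X)
    (f g : X → X → A) : Prop :=
  (∀ x y, g x y = g y x) ∧
  (∀ x y z, g x y + g (x + y) z = g y z + g x (y + z)) ∧
  (∀ x y z, f (x + y) z = f (L.dot x y) (L.dot x z) + f x z) ∧
  (∀ x y z, f x (y + z) - f x y - f x z = g (L.dot x y) (L.dot x z) - g y z)

/-- Normalised 2-cocycles, as an additive subgroup of pairs of maps. -/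
def Zn {X : Type*} [AddCommGroup X] (L : LCS X) (A : Type*) [AddCommGroup A] :
    AddSubgroup ((X → X → A) × (X → X → A)) where
  carrier := {p | IsCocycle L p.1 p.2 ∧ p.2 0 0 = 0}
  zero_mem' := by
    refine ⟨⟨?_, ?_, ?_, ?_⟩, ?_⟩ <;> intros <;> simp
  add_mem' := by
    rintro p q ⟨⟨hp1, hp2, hp3, hp4⟩, hp5⟩ ⟨⟨hq1, hq2, hq3, hq4⟩, hq5⟩
    refine ⟨⟨?_, ?_, ?_, ?_⟩, ?_⟩ <;> intros <;>
      simp only [Prod.fst_add, Prod.snd_add, Pi.add_apply]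
    · rw [hp1, hq1]
    · rw [show ∀ a b c d : A, a + b + (c + d) = (a + c) + (b + d) by intros; abel,
        hp2, hq2]; abel
    · rw [hp3, hq3]; abel
    · rw [show ∀ a b c d e h : A, a + b - (c + d) - (e + h) = (a - c - e) + (b - d - h)
        by intros; abel, hp4, hq4]; abel
    · rw [hp5, hq5]; simp
  neg_mem' := by
    rintro p ⟨⟨hp1, hp2, hp3, hp4⟩, hp5⟩
    refine ⟨⟨?_, ?_, ?_, ?_⟩, ?_⟩ <;> intros <;>
      simp only [Prod.fst_neg, Prod.snd_neg, Pi.neg_apply]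
    · rw [hp1]
    · rw [show ∀ a b : A, -a + -b = -(a + b) by intros; abel, hp2]; abel
    · rw [hp3]; abel
    · rw [show ∀ a b c : A, -a - -b - -c = -(a - b - c) by intros; abel, hp4]; abel
    · rw [hp5]; simp

/-- Normalised 2-coboundaries. -/
def Bn {X : Type*} [AddCommGroup X] (L : LCS X) (A : Type*) [AddCommGroup A] :
    AddSubgroup ((X → X → A) × (X → X → A)) where
  carrier := {p | ∃ l : X → A, l 0 = 0 ∧ (∀ x y, p.1 x y = l (L.dot x y) - l y) ∧
      (∀ x y, p.2 x y = l (x + y) - l x - l y)}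
  zero_mem' := ⟨0, by simp⟩
  add_mem' := by
    rintro p q ⟨l, hl0, hl1, hl2⟩ ⟨m, hm0, hm1, hm2⟩
    refine ⟨l + m, by simp [hl0, hm0], fun x y => ?_, fun x y => ?_⟩ <;>
      simp only [Prod.fst_add, Prod.snd_add, Pi.add_apply, hl1, hm1, hl2, hm2] <;> abel
  neg_mem' := by
    rintro p ⟨l, hl0, hl1, hl2⟩
    refine ⟨-l, by simp [hl0], fun x y => ?_, fun x y => ?_⟩ <;>
      simp only [Prod.fst_neg, Prod.snd_neg, Pi.neg_apply, hl1, hl2] <;> abel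

/-- The second normalised linear cycle set cohomology group. -/
abbrev H2N {X : Type*} [AddCommGroup X] (L : LCS X) (A : Type*) [AddCommGroup A] :=
  Zn L A ⧸ (Bn L A).addSubgroupOf (Zn L A)

/-- Symmetric group 2-cocycles of the abelian group `X` with trivial coefficients `A`. -/
def Zsym (X : Type*) [AddCommGroup X] (A : Type*) [AddCommGroup A] :
    AddSubgroup (X → X → A) where
  carrier := {g | (∀ x y, g x y = g y x) ∧
      ∀ x y z, g x y + g (x + y) z = g y z + g x (y + z)}
  zero_mem' := by refine ⟨?_, ?_⟩ <;> intros <;> simp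
  add_mem' := by
    rintro p q ⟨hp1, hp2⟩ ⟨hq1, hq2⟩
    refine ⟨?_, ?_⟩ <;> intros <;> simp only [Pi.add_apply]
    · rw [hp1, hq1]
    · rw [show ∀ a b c d : A, a + b + (c + d) = (a + c) + (b + d) by intros; abel,
        hp2, hq2]; abel
  neg_mem' := by
    rintro p ⟨hp1, hp2⟩
    refine ⟨?_, ?_⟩ <;> intros <;> simp only [Pi.neg_apply]
    · rw [hp1]
    · rw [show ∀ a b : A, -a + -b = -(a + b) by intros; abel, hp2]; abel

/-- Symmetric group 2-coboundaries. -/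
def Bsym (X : Type*) [AddCommGroup X] (A : Type*) [AddCommGroup A] :
    AddSubgroup (X → X → A) where
  carrier := {g | ∃ l : X → A, ∀ x y, g x y = l (x + y) - l x - l y}
  zero_mem' := ⟨0, by simp⟩
  add_mem' := by
    rintro p q ⟨l, hl⟩ ⟨m, hm⟩
    exact ⟨l + m, fun x y => by simp only [Pi.add_apply, hl, hm]; abel⟩
  neg_mem' := by
    rintro p ⟨l, hl⟩
    exact ⟨-l, fun x y => by simp only [Pi.neg_apply, hl]; abel⟩

/-- The second symmetric cohomology group of an abelian group. -/
abbrev H2sym (X : Type*) [AddCommGroup X] (A : Type*) [AddCommGroup A] :=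
  Zsym X A ⧸ (Bsym X A).addSubgroupOf (Zsym X A)

/-- Linear cycle set automorphisms, as a subgroup of the additive automorphisms. -/
def LCSAut {X : Type*} [AddCommGroup X] (L : LCS X) : AddSubgroup (AddAut X) where
  carrier := {φ | ∀ x y, φ (L.dot x y) = L.dot (φ x) (φ y)}
  zero_mem' := by intro x y; rfl
  add_mem' := by
    intro a b ha hb x y
    simp only [AddAut.add_apply]
    rw [hb x y, ha]
  neg_mem' := by
    intro a ha x y
    apply a.injective
    rw [ha]
    simp

/-- The transported pair of maps under a pair of automorphisms. -/
def transport {X A : Type*} [AddCommGroup X] [AddCommGroup A]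
    (φ : AddAut X) (θ : AddAut A) (p : (X → X → A) × (X → X → A)) :
    (X → X → A) × (X → X → A) :=
  (fun x y => θ (p.1 ((-φ) x) ((-φ) y)), fun x y => θ (p.2 ((-φ) x) ((-φ) y)))

/-- Addition on the extension `X ⊕_{f,g} A`. -/
def addE {X A : Type*} [AddCommGroup X] [AddCommGroup A] (g : X → X → A)
    (p q : X × A) : X × A :=
  (p.1 + q.1, p.2 + q.2 + g p.1 q.1)

/-- Cycle set operation on the extension `X ⊕_{f,g} A`. -/
def dotE {X A : Type*} [AddCommGroup X] [AddCommGroup A] (L : LCS X) (f : X → X → A)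
    (p q : X × A) : X × A :=
  (L.dot p.1 q.1, q.2 + f p.1 q.1)

/-- Normalised 1-cocycles. -/
def Z1 {X : Type*} [AddCommGroup X] (L : LCS X) (A : Type*) [AddCommGroup A] :
    AddSubgroup (X → A) where
  carrier := {l | (∀ x y, l (x + y) = l x + l y) ∧ ∀ x y, l (L.dot x y) = l y}
  zero_mem' := by refine ⟨?_, ?_⟩ <;> intros <;> simp
  add_mem' := by
    rintro p q ⟨hp1, hp2⟩ ⟨hq1, hq2⟩
    refine ⟨?_, ?_⟩ <;> intros <;> simp only [Pi.add_apply, hp1, hq1, hp2, hq2] <;> abel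
  neg_mem' := by
    rintro p ⟨hp1, hp2⟩
    refine ⟨?_, ?_⟩ <;> intros <;> simp only [Pi.neg_apply, hp1, hp2] <;> abel

/-- The subgroup `Aut_A(E)` of the permutation group of `E = X ⊕_{f,g} A`. -/
def AutAE {X A : Type*} [AddCommGroup X] [AddCommGroup A] (L : LCS X)
    (f g : X → X → A) : Subgroup (Equiv.Perm (X × A)) where
  carrier := {ψ | (∀ p q, ψ (addE g p q) = addE g (ψ p) (ψ q)) ∧
      (∀ p q, ψ (dotE L f p q) = dotE L f (ψ p) (ψ q)) ∧
      ∃ φ ∈ LCSAut L, ∃ θ : AddAut A, ∃ l : X → A, ∀ x a, ψ (x, a) = (φ x, l x + θ a)}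
  one_mem' := by
    refine ⟨fun p q => rfl, fun p q => rfl, 0, zero_mem _, 0, 0, fun x a => by simp⟩
  mul_mem' := by
    rintro a b ⟨ha1, ha2, φa, hφa, θa, la, ha3⟩ ⟨hb1, hb2, φb, hφb, θb, lb, hb3⟩
    refine ⟨fun p q => ?_, fun p q => ?_, φa + φb, add_mem hφa hφb, θa + θb,
      fun x => la (φb x) + θa (lb x), fun x a => ?_⟩
    · simp only [Equiv.Perm.mul_apply, hb1, ha1]
    · simp only [Equiv.Perm.mul_apply, hb2, ha2]
    · simp only [Equiv.Perm.mul_apply, hb3, ha3, AddAut.add_apply, map_add]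
      abel_nf
  inv_mem' := by
    rintro ψ ⟨h1, h2, φ, hφ, θ, l, h3⟩
    refine ⟨fun p q => ?_, fun p q => ?_, -φ, neg_mem hφ, -θ,
      fun x => -(-θ) (l ((-φ) x)), fun x a => ?_⟩
    · apply ψ.injective
      simp only [Equiv.Perm.coe_inv, Equiv.apply_symm_apply, h1]
    · apply ψ.injective
      simp only [Equiv.Perm.coe_inv, Equiv.apply_symm_apply, h2]
    · apply ψ.injective
      rw [Equiv.Perm.coe_inv, Equiv.apply_symm_apply, h3]
      simp

/-- A predicate packaging the linear cycle set axioms for a pair of binary operations. -/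
structure IsLCSOps {Y : Type*} (add : Y → Y → Y) (dot : Y → Y → Y) : Prop where
  add_assoc : ∀ a b c, add (add a b) c = add a (add b c)
  add_comm : ∀ a b, add a b = add b a
  zero_exists : ∃ e, (∀ a, add e a = a) ∧ ∀ a, ∃ b, add a b = e
  bij : ∀ a, Function.Bijective (dot a)
  cyc : ∀ a b c, dot (dot a b) (dot a c) = dot (dot b a) (dot b c)
  dot_add : ∀ a b c, dot a (add b c) = add (dot a b) (dot a c)
  add_dot : ∀ a b c, dot (add a b) c = dot (dot a b) (dot a c)

/-- The trivial linear cycle set on an abelian group. -/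
def trivLCS (X : Type*) [AddCommGroup X] : LCS X where
  dot := fun _ y => y
  bij := fun _ => Function.bijective_id
  cyc := fun _ _ _ => rfl
  dot_add := fun _ _ _ => rfl
  add_dot := fun _ _ _ => rfl

/-!
A lift `ψ (x, a) = (φ x, l x + θ a)` preserves the addition and the cycle set operation of
`X ⊕_{f,g} A` exactly when `l` is a normalised coboundary for the pair
`(f ∘ (φ × φ) - θ ∘ f, g ∘ (φ × φ) - θ ∘ g)`. This pair is a normalised 2-cocycle, as the
difference of the pullback of `(f, g)` along the cycle set automorphism `φ` and its pushforward
along `θ`; so when `H²_N(X; A) = 0` such an `l` exists.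
-/

section Lifting

variable {X Y A B : Type*} [AddCommGroup X] [AddCommGroup Y] [AddCommGroup A] [AddCommGroup B]

theorem comp_mem_Zn {L : LCS X} {L' : LCS Y} {f g : Y → Y → A} (hfg : (f, g) ∈ Zn L' A)
    (φ : X →+ Y) (hφ : ∀ x y, φ (L.dot x y) = L'.dot (φ x) (φ y)) :
    ((fun x y => f (φ x) (φ y)), (fun x y => g (φ x) (φ y))) ∈ Zn L A := by
  obtain ⟨⟨hsymm, hassoc, hf_add_left, hf_add_right⟩, hnorm⟩ := hfg
  refine ⟨⟨fun x y => hsymm _ _, fun x y z => ?_, fun x y z => ?_, fun x y z => ?_⟩, ?_⟩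
  · simpa only [map_add] using hassoc (φ x) (φ y) (φ z)
  · simpa only [map_add, hφ] using hf_add_left (φ x) (φ y) (φ z)
  · simpa only [map_add, hφ] using hf_add_right (φ x) (φ y) (φ z)
  · simpa only [map_zero] using hnorm

theorem map_mem_Zn {L : LCS X} {f g : X → X → A} (hfg : (f, g) ∈ Zn L A) (θ : A →+ B) :
    ((fun x y => θ (f x y)), (fun x y => θ (g x y))) ∈ Zn L B := by
  obtain ⟨⟨hsymm, hassoc, hf_add_left, hf_add_right⟩, hnorm⟩ := hfg
  refine ⟨⟨fun x y => congrArg θ (hsymm x y), fun x y z => ?_,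
    fun x y z => (congrArg θ (hf_add_left x y z)).trans (map_add θ _ _), fun x y z => ?_⟩,
    (congrArg θ hnorm).trans (map_zero θ)⟩
  · simpa only [← map_add] using congrArg θ (hassoc x y z)
  · simpa only [← map_sub] using congrArg θ (hf_add_right x y z)

theorem mem_Bn_of_forall_H2N_eq_zero {L : LCS X} (hH : ∀ c : H2N L A, c = 0)
    {p : (X → X → A) × (X → X → A)} (hp : p ∈ Zn L A) : p ∈ Bn L A := by
  have := hH (QuotientAddGroup.mk ⟨p, hp⟩)
  rwa [QuotientAddGroup.eq_zero_iff, AddSubgroup.mem_addSubgroupOf] at this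

def liftPerm (φ : AddAut X) (θ : AddAut A) (l : X → A) : Equiv.Perm (X × A) :=
  Equiv.prodShear φ.toEquiv fun x => θ.toEquiv.trans (Equiv.addLeft (l x))

theorem liftPerm_apply (φ : AddAut X) (θ : AddAut A) (l : X → A) (x : X) (a : A) :
    liftPerm φ θ l (x, a) = (φ x, l x + θ a) :=
  rfl

theorem liftPerm_mem_AutAE {L : LCS X} {f g : X → X → A} {φ : AddAut X} (hφ : φ ∈ LCSAut L)
    {θ : AddAut A} {l : X → A}
    (hf : ∀ x y, f (φ x) (φ y) - θ (f x y) = l (L.dot x y) - l y)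
    (hg : ∀ x y, g (φ x) (φ y) - θ (g x y) = l (x + y) - l x - l y) :
    liftPerm φ θ l ∈ AutAE L f g := by
  refine ⟨fun ⟨x, a⟩ ⟨y, b⟩ => ?_, fun ⟨x, a⟩ ⟨y, b⟩ => ?_, φ, hφ, θ, l, liftPerm_apply φ θ l⟩
  · simp only [addE, liftPerm_apply, map_add, eq_add_of_sub_eq' (hg x y)]
    congr 1
    abel
  · simp only [dotE, liftPerm_apply, map_add, hφ x y, eq_add_of_sub_eq' (hf x y)]
    congr 1
    abel

end Lifting

theorem lift_automorphisms_of_trivial_H2 {X A : Type*} [AddCommGroup X] [AddCommGroup A]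
    (L : LCS X) (hH : ∀ c : H2N L A, c = 0)
    (f g : X → X → A) (hfg : (f, g) ∈ Zn L A)
    (φ : AddAut X) (hφ : φ ∈ LCSAut L) (θ : AddAut A) :
    ∃ ψ : Equiv.Perm (X × A), ψ ∈ AutAE L f g ∧
      ∃ l : X → A, ∀ x a, ψ (x, a) = (φ x, l x + θ a) := by
  have hdiff := sub_mem (comp_mem_Zn hfg φ.toAddMonoidHom hφ) (map_mem_Zn hfg θ.toAddMonoidHom)
  obtain ⟨l, -, hf, hg⟩ := mem_Bn_of_forall_H2N_eq_zero hH hdiff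
  exact ⟨liftPerm φ θ l, liftPerm_mem_AutAE hφ hf hg, l, liftPerm_apply φ θ l⟩
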